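/- arXiv:0906.4643 — 4 statements merged into one kernel-verified Lean document; each statement's English description precedes it below -/
import Mathlib

section
/- Fix p ∈ (0,1), q ∈ (p,1), rates R' > m·D(Ber(q)‖Ber(p)) for some m > 0, and let N = ⌈2^{nR'}⌉ independent binary codewords of length n each be drawn i.i.d. Ber(p). Suppose a fixed subset S of coordinates has size ⌊mn⌋. Then the probability that no codeword has at least q·|S| ones on S tends to 0 as n → ∞. -/
/-!
A single codeword has exactly `t = ⌈qk⌉` ones on the `k = ⌊mn⌋` prescribed coordinates with
probability `δ = C(k,t) p^t (1-p)^(k-t) ≥ 2^(-k D(t/k ‖ p)) / (k+1)`: after the change of parameter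
from `p` to `t/k`, this is the largest of the `k+1` terms of a binomial distribution. The codewords
are independent, so all `N` of them fail with probability at most `(1 - δ)^N ≤ exp(-Nδ)`, and
`Nδ ≥ 2^(n(R' - m D(q‖p)) - o(n))` tends to infinity.
-/

open MeasureTheory ProbabilityTheory Filter

noncomputable def klBer2 (q r : ℝ) : ℝ :=
  q * Real.logb 2 (q / r) + (1 - q) * Real.logb 2 ((1 - q) / (1 - r))

open Finset Topology

lemma choose_succ_mul_pow_mul_pow (a : ℝ) {k i : ℕ} (hi : i < k) :
    (k.choose (i + 1) * a ^ (i + 1) * (1 - a) ^ (k - (i + 1)) : ℝ) * ((i + 1) * (1 - a)) =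
      k.choose i * a ^ i * (1 - a) ^ (k - i) * ((k - i) * a) := by
  have hchoose : (k.choose (i + 1) * (i + 1) : ℝ) = k.choose i * (k - i) := by
    rw [← Nat.cast_sub hi.le]; exact_mod_cast Nat.choose_succ_right_eq k i
  rw [show k - i = k - (i + 1) + 1 by omega]
  linear_combination a ^ (i + 1) * (1 - a) ^ (k - (i + 1)) * (1 - a) * hchoose

theorem inv_succ_le_choose_mul_pow_mul_pow {k t : ℕ} (ht : 0 < t) (htk : t < k) :
    ((k : ℝ) + 1)⁻¹ ≤ k.choose t * ((t : ℝ) / k) ^ t * (1 - (t : ℝ) / k) ^ (k - t) := by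
  set a : ℝ := t / k
  set B : ℕ → ℝ := fun i => k.choose i * a ^ i * (1 - a) ^ (k - i)
  have hk : (0 : ℝ) < k := by exact_mod_cast ht.trans htk
  have ha : a * k = t := div_mul_cancel₀ _ hk.ne'
  have ha0 : 0 < a := by positivity
  have ha1 : a < 1 := (div_lt_one hk).2 (by exact_mod_cast htk)
  have hB : ∀ i, 0 ≤ B i := fun i => by have := ha1.le; positivity
  have hstep : ∀ i < k, B (i + 1) * ((i + 1) * (1 - a)) = B i * ((k - i) * a) :=
    fun i hi => choose_succ_mul_pow_mul_pow a hi
  have hup : MonotoneOn B (Set.Iic t) := by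
    refine monotoneOn_of_le_succ Set.ordConnected_Iic fun i _ _ hi => ?_
    rw [Order.succ_eq_add_one] at hi ⊢
    have hit : (i : ℝ) + 1 ≤ t := by exact_mod_cast hi
    have hpos : 0 < ((i : ℝ) + 1) * (1 - a) := by nlinarith
    refine le_of_mul_le_mul_right ?_ hpos
    rw [hstep i (by simp at hi; omega)]
    refine mul_le_mul_of_nonneg_left ?_ (hB i)
    nlinarith
  have hdown : AntitoneOn B (Set.Icc t k) := by
    refine antitoneOn_of_succ_le Set.ordConnected_Icc fun i _ hi hi1 => ?_
    rw [Order.succ_eq_add_one] at hi1 ⊢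
    have hti : (t : ℝ) ≤ i := by exact_mod_cast hi.1
    have hpos : 0 < ((i : ℝ) + 1) * (1 - a) := by nlinarith
    refine le_of_mul_le_mul_right ?_ hpos
    rw [hstep i (by simp at hi1; omega)]
    refine mul_le_mul_of_nonneg_left ?_ (hB i)
    nlinarith
  have hmax : ∀ i ∈ range (k + 1), B i ≤ B t := by
    intro i hi
    rcases le_total i t with hit | hti
    · exact hup hit (Set.mem_Iic.2 le_rfl) hit
    · exact hdown ⟨le_rfl, htk.le⟩ ⟨hti, Nat.lt_succ_iff.1 (mem_range.1 hi)⟩ hti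
  have hsum : ∑ i ∈ range (k + 1), B i = 1 := by
    calc ∑ i ∈ range (k + 1), B i = (a + (1 - a)) ^ k := by
          rw [add_pow]; exact sum_congr rfl fun i _ => by ring
      _ = 1 := by simp
  rw [inv_le_iff_one_le_mul₀ (by positivity)]
  calc (1 : ℝ) = ∑ i ∈ range (k + 1), B i := hsum.symm
    _ ≤ ∑ _i ∈ range (k + 1), B t := sum_le_sum hmax
    _ = B t * (k + 1) := by simp [mul_comm]

lemma two_rpow_neg_mul_klBer2 {a r : ℝ} (ha0 : 0 < a) (ha1 : a < 1) (hr0 : 0 < r) (hr1 : r < 1)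
    (x : ℝ) :
    (2 : ℝ) ^ (-(x * klBer2 a r)) = (r / a) ^ (x * a) * ((1 - r) / (1 - a)) ^ (x * (1 - a)) := by
  have h1a : 0 < 1 - a := by linarith
  have h1r : 0 < 1 - r := by linarith
  have hlog : -(x * klBer2 a r) =
      x * a * Real.logb 2 (r / a) + x * (1 - a) * Real.logb 2 ((1 - r) / (1 - a)) := by
    rw [klBer2, ← inv_div, ← inv_div (1 - r), Real.logb_inv, Real.logb_inv]; ring
  rw [hlog, Real.rpow_add two_pos, mul_comm (x * a), mul_comm (x * (1 - a)),
    Real.rpow_mul zero_le_two, Real.rpow_mul zero_le_two,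
    Real.rpow_logb two_pos (by norm_num) (by positivity),
    Real.rpow_logb two_pos (by norm_num) (by positivity)]

theorem inv_succ_mul_two_rpow_le_choose_mul_pow_mul_pow {p : ℝ} (hp0 : 0 < p) (hp1 : p < 1)
    {k t : ℕ} (ht : 0 < t) (htk : t < k) :
    ((k : ℝ) + 1)⁻¹ * 2 ^ (-(k * klBer2 (t / k) p)) ≤ k.choose t * p ^ t * (1 - p) ^ (k - t) := by
  have hmax := inv_succ_le_choose_mul_pow_mul_pow ht htk
  set a : ℝ := t / k
  have hk : (0 : ℝ) < k := by exact_mod_cast ht.trans htk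
  have ha0 : 0 < a := by positivity
  have ha1 : a < 1 := (div_lt_one hk).2 (by exact_mod_cast htk)
  have h1a : 0 < 1 - a := by linarith
  have h1p : 0 < 1 - p := by linarith
  have hka : (k : ℝ) * a = t := mul_div_cancel₀ _ hk.ne'
  have hk1a : (k : ℝ) * (1 - a) = (k - t : ℕ) := by
    rw [Nat.cast_sub htk.le, mul_one_sub, hka]
  clear_value a
  rw [two_rpow_neg_mul_klBer2 ha0 ha1 hp0 hp1, hka, hk1a, Real.rpow_natCast, Real.rpow_natCast]
  calc ((k : ℝ) + 1)⁻¹ * ((p / a) ^ t * ((1 - p) / (1 - a)) ^ (k - t))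
      ≤ (k.choose t * a ^ t * (1 - a) ^ (k - t)) * ((p / a) ^ t * ((1 - p) / (1 - a)) ^ (k - t)) :=
        mul_le_mul_of_nonneg_right hmax (by positivity)
    _ = k.choose t * p ^ t * (1 - p) ^ (k - t) := by
        rw [div_pow, div_pow]; field_simp

lemma continuousAt_klBer2 {a r : ℝ} (ha0 : 0 < a) (ha1 : a < 1) (hr0 : 0 < r) (hr1 : r < 1) :
    ContinuousAt (klBer2 · r) a := by
  have : 0 < 1 - a := by linarith
  have : 0 < 1 - r := by linarith
  unfold klBer2
  fun_prop (disch := positivity)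

lemma tendsto_two_rpow_mul_div_atTop {c a : ℝ} (hc : 0 < c) (ha : 0 < a) :
    Tendsto (fun n : ℕ => (2 : ℝ) ^ (c * n) / (a * n)) atTop atTop := by
  have hb : 0 < Real.log 2 * c := mul_pos (Real.log_pos one_lt_two) hc
  refine ((tendsto_exp_mul_div_rpow_atTop 1 _ hb).const_mul_atTop (inv_pos.2 ha)).comp
    tendsto_natCast_atTop_atTop |>.congr fun n => ?_
  simp only [Function.comp_apply, Real.rpow_one, Real.rpow_def_of_pos two_pos]
  rw [mul_assoc, div_mul_eq_div_div_swap, inv_mul_eq_div]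

theorem tendsto_two_rpow_mul_choose_mul_pow_mul_pow_atTop {p q m R : ℝ} (hp0 : 0 < p) (hp1 : p < 1)
    (hq0 : 0 < q) (hq1 : q < 1) (hR : m * klBer2 q p < R) {k t : ℕ → ℕ}
    (hk : Tendsto (fun n : ℕ => (k n : ℝ) / n) atTop (𝓝 m))
    (ht : Tendsto (fun n => (t n : ℝ) / k n) atTop (𝓝 q)) :
    Tendsto (fun n : ℕ =>
      (2 : ℝ) ^ (n * R) * ((k n).choose (t n) * p ^ t n * (1 - p) ^ (k n - t n))) atTop atTop := by
  set c := (R - m * klBer2 q p) / 2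
  have hc : 0 < c := by simp only [c]; linarith
  have hrate : Tendsto (fun n => (k n : ℝ) / n * klBer2 (t n / k n) p) atTop
      (𝓝 (m * klBer2 q p)) :=
    hk.mul ((continuousAt_klBer2 hq0 hq1 hp0 hp1).tendsto.comp ht)
  have hev : ∀ᶠ n : ℕ in atTop, 0 < n ∧ (t n : ℝ) / k n ∈ Set.Ioo 0 1 ∧
      (k n : ℝ) / n * klBer2 (t n / k n) p < R - c ∧ (k n : ℝ) / n < m + 1 :=
    (eventually_gt_atTop 0).and <| (ht.eventually (Ioo_mem_nhds hq0 hq1)).and <|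
      (hrate.eventually (gt_mem_nhds (by simp only [c]; linarith))).and
        (hk.eventually (gt_mem_nhds (by linarith)))
  have hm : 0 < m + 2 := by
    linarith [ge_of_tendsto' hk fun n => div_nonneg (k n).cast_nonneg n.cast_nonneg]
  refine tendsto_atTop_mono' _ (hev.mono fun n ⟨hn, ⟨hα0, hα1⟩, hrate_n, hk_n⟩ => ?_)
    (tendsto_two_rpow_mul_div_atTop hc hm)
  have hnR : (0 : ℝ) < n := by exact_mod_cast hn
  obtain ⟨ht0, hk0⟩ : (0 : ℝ) < t n ∧ (0 : ℝ) < k n := by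
    simpa [div_pos_iff, (Nat.cast_nonneg _).not_gt] using hα0
  have htk : t n < k n := by exact_mod_cast (div_lt_one hk0).1 hα1
  have hexp : (k n : ℝ) * klBer2 (t n / k n) p ≤ n * (R - c) := by
    rw [div_mul_eq_mul_div, div_lt_iff₀ hnR] at hrate_n; linarith
  have hsucc : (k n : ℝ) + 1 ≤ (m + 2) * n := by
    rw [div_lt_iff₀ hnR] at hk_n; nlinarith [(by exact_mod_cast hn : (1 : ℝ) ≤ n)]
  have hsplit : (2 : ℝ) ^ (c * n) = 2 ^ (n * R) * 2 ^ (-(n * (R - c))) := by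
    rw [← Real.rpow_add two_pos]; ring_nf
  calc (2 : ℝ) ^ (c * n) / ((m + 2) * n)
      = 2 ^ (n * R) * (((m + 2) * n)⁻¹ * 2 ^ (-(n * (R - c)))) := by rw [hsplit]; ring
    _ ≤ 2 ^ (n * R) * (((k n : ℝ) + 1)⁻¹ * 2 ^ (-(k n * klBer2 (t n / k n) p))) := by
        refine mul_le_mul_of_nonneg_left (mul_le_mul ?_ ?_ (by positivity) (by positivity))
          (by positivity)
        · exact inv_anti₀ (by positivity) hsucc
        · exact Real.rpow_le_rpow_of_exponent_le one_le_two (neg_le_neg hexp)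
    _ ≤ _ := by
        refine mul_le_mul_of_nonneg_left ?_ (by positivity)
        exact inv_succ_mul_two_rpow_le_choose_mul_pow_mul_pow hp0 hp1 (by exact_mod_cast ht0) htk

theorem ProbabilityTheory.iIndepFun.curry {Ω ι κ : Type*} {mΩ : MeasurableSpace Ω} {P : Measure Ω}
    [IsProbabilityMeasure P] {𝓧 : ι → κ → Type*} [∀ i j, MeasurableSpace (𝓧 i j)]
    {X : (i : ι) → (j : κ) → Ω → 𝓧 i j} (mX : ∀ i j, Measurable (X i j))
    (h : iIndepFun (fun (p : ι × κ) ω => X p.1 p.2 ω) P) :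
    iIndepFun (fun i ω => (X i · ω)) P := by
  have hσ : iIndepFun (fun (p : (_ : ι) × κ) ω => X p.1 p.2 ω) P :=
    h.precomp (Equiv.sigmaEquivProd ι κ).injective
  have hrow : ∀ i, P.map (fun ω => (X i · ω)) = Measure.infinitePi fun j => P.map (X i j) :=
    fun i => (h.precomp (Prod.mk_right_injective i)).map_fun_eq_infinitePi_map (mX i)
  have hcurry : (MeasurableEquiv.piCurry 𝓧) ∘ (fun ω (p : (_ : ι) × κ) => X p.1 p.2 ω) =
      fun ω i j => X i j ω := rfl
  have : ∀ i j, IsProbabilityMeasure (P.map (X i j)) :=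
    fun i j => Measure.isProbabilityMeasure_map (mX i j).aemeasurable
  rw [iIndepFun_iff_map_fun_eq_infinitePi_map (by fun_prop)]
  simp_rw [hrow]
  rw [← hcurry, ← Measure.map_map (by fun_prop) (by fun_prop),
    hσ.map_fun_eq_infinitePi_map (fun p => mX p.1 p.2)]
  exact Measure.infinitePi_map_piCurry fun i j => P.map (X i j)

lemma setOf_filter_eq {Ω κ : Type*} [DecidableEq κ] {X : κ → Ω → Bool} {S T : Finset κ}
    (hTS : T ⊆ S) :
    {ω | {j ∈ S | X j ω} = T} = ⋂ j ∈ S, X j ⁻¹' {decide (j ∈ T)} := by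
  ext ω
  simp only [Set.mem_ofPred_eq, Set.mem_iInter, Set.mem_preimage, Set.mem_singleton_iff]
  constructor
  · rintro rfl j hj
    simp [hj]
  · intro h
    ext j
    by_cases hj : j ∈ S
    · simp [hj, h j hj]
    · simpa [hj] using fun hjT => hj (hTS hjT)

section BernoulliFamily

variable {Ω κ : Type*} [MeasurableSpace Ω] {X : κ → Ω → Bool}

lemma measurable_card_filter (hX : ∀ j, Measurable (X j)) (S : Finset κ) :
    Measurable fun ω => #{j ∈ S | X j ω} := by
  simp_rw [card_filter]
  exact Finset.measurable_sum S fun j _ =>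
    Measurable.ite (hX j (measurableSet_singleton true)) measurable_const measurable_const

lemma measurableSet_setOf_filter_eq [DecidableEq κ] (hX : ∀ j, Measurable (X j))
    {S T : Finset κ} (hTS : T ⊆ S) :
    MeasurableSet {ω | {j ∈ S | X j ω} = T} := by
  rw [setOf_filter_eq hTS]
  exact .biInter S.countable_toSet fun j _ => hX j (measurableSet_singleton _)

variable {μ : Measure Ω} [IsProbabilityMeasure μ] {p : ℝ}

lemma measure_preimage_bool {f : Ω → Bool} (hf : Measurable f) (hp : 0 ≤ p)
    (hber : μ {ω | f ω = true} = ENNReal.ofReal p) (b : Bool) :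
    μ (f ⁻¹' {b}) = ENNReal.ofReal (if b then p else 1 - p) := by
  cases b with
  | true => exact hber
  | false =>
    have htrue : MeasurableSet {ω | f ω = true} := hf (measurableSet_singleton true)
    have hcompl : f ⁻¹' {false} = {ω | f ω = true}ᶜ := by ext; simp
    rw [hcompl, prob_compl_eq_one_sub htrue, hber, ← ENNReal.ofReal_one,
      ← ENNReal.ofReal_sub 1 hp]
    rfl

variable [DecidableEq κ]

lemma measure_filter_eq (hX : ∀ j, Measurable (X j)) (hind : iIndepFun X μ) (hp0 : 0 ≤ p)
    (hp1 : p ≤ 1) (hber : ∀ j, μ {ω | X j ω = true} = ENNReal.ofReal p) {S T : Finset κ}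
    (hTS : T ⊆ S) :
    μ {ω | {j ∈ S | X j ω} = T} = ENNReal.ofReal (p ^ #T * (1 - p) ^ (#S - #T)) := by
  rw [setOf_filter_eq hTS, hind.meas_biInter fun j _ => ⟨{decide (j ∈ T)}, trivial, rfl⟩]
  simp_rw [measure_preimage_bool (hX _) hp0 (hber _), decide_eq_true_eq]
  rw [← ENNReal.ofReal_prod_of_nonneg fun j _ => by split_ifs <;> linarith, prod_ite,
    filter_mem_eq_inter, inter_eq_right.2 hTS, filter_not, filter_mem_eq_inter,
    inter_eq_right.2 hTS, prod_const, prod_const, card_sdiff_of_subset hTS]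

theorem measure_card_filter_eq (hX : ∀ j, Measurable (X j)) (hind : iIndepFun X μ) (hp0 : 0 ≤ p)
    (hp1 : p ≤ 1) (hber : ∀ j, μ {ω | X j ω = true} = ENNReal.ofReal p) (S : Finset κ) (t : ℕ) :
    μ {ω | #{j ∈ S | X j ω} = t} = ENNReal.ofReal ((#S).choose t * p ^ t * (1 - p) ^ (#S - t)) := by
  have hfiber : {ω | #{j ∈ S | X j ω} = t} =
      (fun ω => {j ∈ S | X j ω}) ⁻¹' ↑(S.powersetCard t) := by
    ext ω; simp [mem_powersetCard, filter_subset]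
  rw [hfiber, ← sum_measure_preimage_singleton _ fun T hT =>
    measurableSet_setOf_filter_eq hX (mem_powersetCard.1 hT).1]
  calc ∑ T ∈ S.powersetCard t, μ ((fun ω => {j ∈ S | X j ω}) ⁻¹' {T})
      = ∑ T ∈ S.powersetCard t, ENNReal.ofReal (p ^ t * (1 - p) ^ (#S - t)) := by
        refine sum_congr rfl fun T hT => ?_
        obtain ⟨hTS, rfl⟩ := mem_powersetCard.1 hT
        exact measure_filter_eq hX hind hp0 hp1 hber hTS
    _ = _ := by
        rw [sum_const, card_powersetCard, nsmul_eq_mul, ← ENNReal.ofReal_natCast,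
          ← ENNReal.ofReal_mul (by positivity), mul_assoc]

theorem measure_card_filter_lt_le (hX : ∀ j, Measurable (X j)) (hind : iIndepFun X μ)
    (hp0 : 0 ≤ p) (hp1 : p ≤ 1) (hber : ∀ j, μ {ω | X j ω = true} = ENNReal.ofReal p)
    (S : Finset κ) {x : ℝ} {t : ℕ} (hxt : x ≤ t) :
    μ {ω | (#{j ∈ S | X j ω} : ℝ) < x} ≤
      1 - ENNReal.ofReal ((#S).choose t * p ^ t * (1 - p) ^ (#S - t)) := by
  have hdisj : Disjoint {ω | (#{j ∈ S | X j ω} : ℝ) < x} {ω | #{j ∈ S | X j ω} = t} :=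
    Set.disjoint_left.2 fun ω hlt heq => by
      simp only [Set.mem_ofPred_eq] at hlt heq; rw [heq] at hlt; linarith
  have hmeas : MeasurableSet {ω | #{j ∈ S | X j ω} = t} :=
    measurable_card_filter hX S (measurableSet_singleton t)
  rw [← measure_card_filter_eq hX hind hp0 hp1 hber S t]
  refine ENNReal.le_sub_of_add_le_right (measure_ne_top _ _) ?_
  rw [← measure_union hdisj hmeas]
  exact prob_le_one

theorem measure_forall_card_filter_lt_le {ι : Type*} [Fintype ι] [Fintype κ]
    {C : ι → κ → Ω → Bool} (hC : ∀ i j, Measurable (C i j))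
    (hind : iIndepFun (fun (ij : ι × κ) ω => C ij.1 ij.2 ω) μ) (hp0 : 0 ≤ p) (hp1 : p ≤ 1)
    (hber : ∀ i j, μ {ω | C i j ω = true} = ENNReal.ofReal p) (S : Finset κ) {x : ℝ} {t : ℕ}
    (hxt : x ≤ t) :
    μ {ω | ∀ i, (#{j ∈ S | C i j ω} : ℝ) < x} ≤
      ENNReal.ofReal
        (Real.exp (-(Fintype.card ι * ((#S).choose t * p ^ t * (1 - p) ^ (#S - t))))) := by
  set δ := (#S).choose t * p ^ t * (1 - p) ^ (#S - t)
  have hδ : 0 ≤ δ := by have := sub_nonneg.2 hp1; positivity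
  have hrow : ∀ i, μ {ω | (#{j ∈ S | C i j ω} : ℝ) < x} ≤ ENNReal.ofReal (Real.exp (-δ)) := by
    intro i
    have hind_i : iIndepFun (C i) μ := hind.precomp (g := Prod.mk i) (Prod.mk_right_injective i)
    refine (measure_card_filter_lt_le (hC i) hind_i hp0 hp1 (hber i) S hxt).trans ?_
    rw [← ENNReal.ofReal_one, ← ENNReal.ofReal_sub 1 hδ]
    exact ENNReal.ofReal_le_ofReal (by linarith [Real.add_one_le_exp (-δ)])
  calc μ {ω | ∀ i, (#{j ∈ S | C i j ω} : ℝ) < x}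
      = ∏ i, μ {ω | (#{j ∈ S | C i j ω} : ℝ) < x} := by
        rw [Set.ofPred_forall]
        exact (hind.curry hC).meas_iInter fun i =>
          ⟨{y | (#{j ∈ S | y j = true} : ℝ) < x}, .of_discrete, rfl⟩
    _ ≤ ∏ _i : ι, ENNReal.ofReal (Real.exp (-δ)) := prod_le_prod' fun i _ => hrow i
    _ = _ := by
        rw [prod_const, ← ENNReal.ofReal_pow (Real.exp_pos _).le, ← Real.exp_nat_mul, card_univ,
          mul_neg]

end BernoulliFamily

/-- Covering step: with `N = ⌈2^{nR'}⌉` i.i.d. Ber(p) codewords of length `n` and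
`R' > m·D(Ber q‖Ber p)`, the probability that no codeword has at least `q·|S|` ones
on a prescribed set `S` of `⌊mn⌋` coordinates tends to `0`. -/
theorem covering_success (p q m R' : ℝ) (hp : p ∈ Set.Ioo (0 : ℝ) 1)
    (hq : q ∈ Set.Ioo p 1) (hm : 0 < m) (hR' : m * klBer2 q p < R')
    (Ω : ℕ → Type) [ms : ∀ n, MeasurableSpace (Ω n)]
    (μ : ∀ n, Measure (Ω n)) [∀ n, IsProbabilityMeasure (μ n)]
    (N : ℕ → ℕ) (hN : ∀ n, N n = ⌈(2 : ℝ) ^ ((n : ℝ) * R')⌉₊)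
    (C : ∀ n, Fin (N n) → Fin n → Ω n → Bool)
    (hmeas : ∀ n i j, Measurable (C n i j))
    (hindep : ∀ n, iIndepFun
      (fun (ij : Fin (N n) × Fin n) ω => C n ij.1 ij.2 ω) (μ n))
    (hber : ∀ n i j, μ n {ω | C n i j ω = true} = ENNReal.ofReal p)
    (S : ∀ n, Finset (Fin n)) (hS : ∀ n, (S n).card = ⌊m * n⌋₊) :
    Tendsto
      (fun n => μ n {ω | ∀ i : Fin (N n),
        (∑ j ∈ S n, (if C n i j ω = true then (1 : ℝ) else 0)) < q * (S n).card})
      atTop (nhds 0) := by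
  obtain ⟨hp0, hp1⟩ := hp
  obtain ⟨hq0, hq1⟩ : 0 < q ∧ q < 1 := ⟨hp0.trans hq.1, hq.2⟩
  set k : ℕ → ℕ := fun n => ⌊m * n⌋₊
  set t : ℕ → ℕ := fun n => ⌈q * k n⌉₊
  set δ : ℕ → ℝ := fun n => (k n).choose (t n) * p ^ t n * (1 - p) ^ (k n - t n)
  have hk : Tendsto (fun n : ℕ => (k n : ℝ) / n) atTop (𝓝 m) :=
    (tendsto_nat_floor_mul_div_atTop hm.le).comp tendsto_natCast_atTop_atTop
  have ht : Tendsto (fun n => (t n : ℝ) / k n) atTop (𝓝 q) :=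
    (tendsto_nat_ceil_mul_div_atTop hq0.le).comp <|
      tendsto_natCast_atTop_atTop.comp (tendsto_nat_floor_mul_atTop m hm)
  have hNδ : Tendsto (fun n : ℕ => (2 : ℝ) ^ (n * R') * δ n) atTop atTop :=
    tendsto_two_rpow_mul_choose_mul_pow_mul_pow_atTop hp0 hp1 hq0 hq1 hR' hk ht
  have hexp : Tendsto (fun n : ℕ => ENNReal.ofReal (Real.exp (-((2 : ℝ) ^ (n * R') * δ n)))) atTop
      (𝓝 0) := by
    simpa using ENNReal.tendsto_ofReal
      (Real.tendsto_exp_atBot.comp (tendsto_neg_atTop_atBot.comp hNδ))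
  refine tendsto_of_tendsto_of_tendsto_of_le_of_le tendsto_const_nhds hexp (fun _ => zero_le)
    fun n => ?_
  simp only [sum_boole]
  refine (measure_forall_card_filter_lt_le (hmeas n) (hindep n) hp0.le hp1.le (hber n) (S n)
    (Nat.le_ceil _)).trans (ENNReal.ofReal_le_ofReal (Real.exp_le_exp.2 (neg_le_neg ?_)))
  rw [Fintype.card_fin, hN n, hS n]
  exact mul_le_mul_of_nonneg_right (Nat.le_ceil _) (by have := hp1.le; positivity)
end

section
/- Let U be a random variable taking values in functions u : {0,1} → X, let S ∼ Ber(σ) be independent of U, and let Y be generated by a channel W(y|x,s) with W(y|x,1) independent of x. Define X' = U(0) (a random variable on X with distribution P_{X'}(x) = ∑_{u : u(0)=x} P_U(u)) and let Y' be the output when X' is sent through the same channel with an independent state S' ∼ Ber(σ). Then I(U;Y) = I(X';Y'). -/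
open scoped BigOperators

/-- Mutual information `I(U;Y)` (natural log) for a finite input distribution `PU`
and transition law `PYgU`. -/
noncomputable def mutInfo {U Y : Type} [Fintype U] [Fintype Y]
    (PU : U → ℝ) (PYgU : U → Y → ℝ) : ℝ :=
  ∑ u, ∑ y, PU u * PYgU u y *
    Real.log (PYgU u y / ∑ u', PU u' * PYgU u' y)

/-!
When the state is `1` the channel forgets its input, so the output law of a strategy `u` is
`(1 - σ) W(·|u 0, 0) + σ W(·|u 1, 1) = (1 - σ) W(·|u 0, 0) + σ W(·|u 0, 1)`, which depends on `u`
only through `u 0`. Mutual information is unchanged when the input is replaced by a statistic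
through which the channel factors, with the input law pushed forward along it.
-/

open Finset

section Pushforward

variable {U V Y : Type} [Fintype U] [Fintype V] [Fintype Y] [DecidableEq V]

theorem sum_mul_comp_eq_sum_fiber_mul (PU : U → ℝ) (f : U → V) (g : V → ℝ) :
    ∑ u, PU u * g (f u) = ∑ v, (∑ u ∈ univ.filter (fun u => f u = v), PU u) * g v := by
  rw [← sum_fiberwise univ f]
  refine sum_congr rfl fun v _ => ?_
  rw [sum_mul]
  exact sum_congr rfl fun u hu => by rw [(mem_filter.1 hu).2]

theorem mutInfo_comp_eq_mutInfo_pushforward (PU : U → ℝ) (f : U → V) (Q : V → Y → ℝ) :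
    mutInfo PU (fun u y => Q (f u) y) =
      mutInfo (fun v => ∑ u ∈ univ.filter (fun u => f u = v), PU u) Q := by
  unfold mutInfo
  have hout : ∀ y, ∑ u, PU u * Q (f u) y =
      ∑ v, (∑ u ∈ univ.filter (fun u => f u = v), PU u) * Q v y :=
    fun y => sum_mul_comp_eq_sum_fiber_mul PU f (Q · y)
  simp_rw [hout, mul_assoc, ← mul_sum]
  exact sum_mul_comp_eq_sum_fiber_mul PU f fun v => ∑ y, Q v y *
    Real.log (Q v y / ∑ v', (∑ u ∈ univ.filter (fun u => f u = v'), PU u) * Q v' y)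

end Pushforward

theorem strategy_equals_constant_input_general (X Y : Type) [Fintype X] [Fintype Y]
    [DecidableEq X] (W : X → Bool → Y → ℝ) (σ : ℝ)
    (hstuck : ∀ x x' y, W x true y = W x' true y)
    (PU : (Bool → X) → ℝ) :
    mutInfo PU (fun u y => (1 - σ) * W (u false) false y + σ * W (u true) true y)
      =
    mutInfo (fun x : X => ∑ u ∈ Finset.univ.filter (fun u : Bool → X => u false = x), PU u)
      (fun x y => (1 - σ) * W x false y + σ * W x true y) := by
  have hlaw : (fun (u : Bool → X) y => (1 - σ) * W (u false) false y + σ * W (u true) true y) =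
      fun u y => (1 - σ) * W (u false) false y + σ * W (u false) true y := by
    funext u y
    rw [hstuck (u true) (u false) y]
  rw [hlaw]
  exact mutInfo_comp_eq_mutInfo_pushforward PU (fun u => u false)
    (fun x y => (1 - σ) * W x false y + σ * W x true y)

/-- If the state is `Ber(σ)` and the output law does not depend on the input when
the state is `1`, then a random strategy `U : {0,1} → X` yields the same mutual
information with the output as the deterministic input `X' = U(0)` sent through
the same channel with a fresh independent state. -/
theorem strategy_equals_constant_input (X Y : Type) [Fintype X] [Fintype Y]
    [DecidableEq X] (W : X → Bool → Y → ℝ) (σ : ℝ) (hσ : σ ∈ Set.Icc (0 : ℝ) 1)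
    (hW0 : ∀ x s y, 0 ≤ W x s y) (hW1 : ∀ x s, ∑ y, W x s y = 1)
    (hstuck : ∀ x x' y, W x true y = W x' true y)
    (PU : (Bool → X) → ℝ) (hPU0 : ∀ u, 0 ≤ PU u) (hPU1 : ∑ u, PU u = 1) :
    mutInfo PU (fun u y => (1 - σ) * W (u false) false y + σ * W (u true) true y)
      =
    mutInfo (fun x : X => ∑ u ∈ Finset.univ.filter (fun u : Bool → X => u false = x), PU u)
      (fun x y => (1 - σ) * W x false y + σ * W x true y) :=
  strategy_equals_constant_input_general X Y W σ hstuck PU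
end

section
/- For A > 0 and λ ≥ 0, the function λ ↦ C(A,λ) := sup_{p∈(0,1)} (pA+λ)·D(Ber(p(A+λ)/(pA+λ)) ‖ Ber(p)) is nonincreasing in λ. -/
/-!
With `φ x = x log x`, the quantity `(pA + λ) · D(Ber(p(A+λ)/(pA+λ)) ‖ Ber p)` is the Jensen gap
`p φ(A+λ) + (1-p) φ(λ) - φ(pA+λ)`. Its derivative in `λ` is
`p log(A+λ) + (1-p) log λ - log(pA+λ)`, which is nonpositive by concavity of `log`, so every
term of the supremum decreases with `λ`. At `λ = 0` the gap is `A · negMulLog p ≤ A`, which bounds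
the set whose supremum is the capacity.
-/

/-- Binary relative entropy (natural log). -/
noncomputable def klBer (q r : ℝ) : ℝ :=
  q * Real.log (q / r) + (1 - q) * Real.log ((1 - q) / (1 - r))

/-- Capacity of the peak-limited Poisson channel with peak power `A` and dark
current `lam`. -/
noncomputable def poissonCapacity (A lam : ℝ) : ℝ :=
  sSup {r : ℝ | ∃ p ∈ Set.Ioo (0 : ℝ) 1,
    r = (p * A + lam) * klBer (p * (A + lam) / (p * A + lam)) p}

open Real Set

noncomputable def infoRate (A p l : ℝ) : ℝ :=
  p * ((A + l) * log (A + l)) + (1 - p) * (l * log l) - (p * A + l) * log (p * A + l)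

lemma mul_log_div_eq {x y : ℝ} (hy : y ≠ 0) : x * log (x / y) = x * log x - x * log y := by
  rcases eq_or_ne x 0 with rfl | hx
  · simp
  · rw [log_div hx hy, mul_sub]

lemma mul_klBer_eq_infoRate {A p l : ℝ} (hp₀ : p ≠ 0) (hp₁ : p ≠ 1) (hs : p * A + l ≠ 0) :
    (p * A + l) * klBer (p * (A + l) / (p * A + l)) p = infoRate A p l := by
  have hp₁' : 1 - p ≠ 0 := sub_ne_zero.mpr hp₁.symm
  have hq : p * (A + l) / (p * A + l) / p = (A + l) / (p * A + l) := by
    field_simp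
  have hq' : (1 - p * (A + l) / (p * A + l)) / (1 - p) = l / (p * A + l) := by
    field_simp
    ring
  have h1q : (p * A + l) * (1 - p * (A + l) / (p * A + l)) = (1 - p) * l := by
    field_simp
    ring
  rw [klBer, hq, hq', mul_add, ← mul_assoc, ← mul_assoc, h1q, mul_div_cancel₀ _ hs,
    mul_assoc, mul_assoc, mul_log_div_eq hs, mul_log_div_eq hs, infoRate]
  ring

lemma continuous_infoRate (A p : ℝ) : Continuous (infoRate A p) := by
  have hφ := continuous_mul_log
  unfold infoRate
  fun_prop

lemma hasDerivAt_infoRate {A p l : ℝ} (hl : l ≠ 0) (hAl : A + l ≠ 0) (hs : p * A + l ≠ 0) :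
    HasDerivAt (infoRate A p) (p * log (A + l) + (1 - p) * log l - log (p * A + l)) l := by
  have hA := (hasDerivAt_mul_log hAl).comp_const_add A l
  have hs' := (hasDerivAt_mul_log hs).comp_const_add (p * A) l
  exact (((hA.const_mul p).add ((hasDerivAt_mul_log hl).const_mul (1 - p))).sub hs').congr_deriv
    (by ring)

lemma infoRate_antitoneOn {A p : ℝ} (hA : 0 ≤ A) (hp₀ : 0 ≤ p) (hp₁ : p ≤ 1) :
    AntitoneOn (infoRate A p) (Ici 0) := by
  refine antitoneOn_of_hasDerivWithinAt_nonpos (convex_Ici 0)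
    (continuous_infoRate A p).continuousOn (f' := fun l =>
      p * log (A + l) + (1 - p) * log l - log (p * A + l)) (fun l hl => ?_) (fun l hl => ?_)
  all_goals
    rw [interior_Ici, mem_Ioi] at hl
    have hAl : 0 < A + l := by positivity
    have hs : 0 < p * A + l := by positivity
  · exact (hasDerivAt_infoRate hl.ne' hAl.ne' hs.ne').hasDerivWithinAt
  · have hconc := strictConcaveOn_log_Ioi.concaveOn.2 (mem_Ioi.mpr hAl) (mem_Ioi.mpr hl) hp₀
      (sub_nonneg.mpr hp₁) (add_sub_cancel p 1)
    simp only [smul_eq_mul] at hconc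
    have hmix : p * (A + l) + (1 - p) * l = p * A + l := by ring
    rw [hmix] at hconc
    linarith

lemma infoRate_zero (A p : ℝ) (hp : p ≠ 0) : infoRate A p 0 = A * negMulLog p := by
  rcases eq_or_ne A 0 with rfl | hA
  · simp [infoRate]
  · simp only [infoRate, add_zero, zero_mul, mul_zero, log_mul hp hA, negMulLog]
    ring

lemma infoRate_le {A p l : ℝ} (hA : 0 ≤ A) (hp : p ∈ Ioo (0 : ℝ) 1) (hl : 0 ≤ l) :
    infoRate A p l ≤ A :=
  calc infoRate A p l ≤ infoRate A p 0 :=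
        infoRate_antitoneOn hA hp.1.le hp.2.le self_mem_Ici hl hl
    _ = A * negMulLog p := infoRate_zero A p hp.1.ne'
    _ ≤ A * 1 := by
        gcongr
        linarith [negMulLog_le_one_sub_self hp.1.le, hp.1]
    _ = A := mul_one A

/-- The Poisson capacity is nonincreasing in the dark current. -/
theorem poissonCapacity_antitone (A : ℝ) (hA : 0 < A) :
    ∀ lam₁ lam₂ : ℝ, 0 ≤ lam₁ → lam₁ ≤ lam₂ →
      poissonCapacity A lam₂ ≤ poissonCapacity A lam₁ := by
  intro lam₁ lam₂ h₁ h₁₂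
  have hrate : ∀ {p l : ℝ}, p ∈ Ioo (0 : ℝ) 1 → 0 ≤ l →
      (p * A + l) * klBer (p * (A + l) / (p * A + l)) p = infoRate A p l := fun hp hl =>
    mul_klBer_eq_infoRate hp.1.ne' hp.2.ne (by have := hp.1; positivity)
  have hbdd : BddAbove {r : ℝ | ∃ p ∈ Ioo (0 : ℝ) 1,
      r = (p * A + lam₁) * klBer (p * (A + lam₁) / (p * A + lam₁)) p} := by
    refine ⟨A, ?_⟩
    rintro r ⟨p, hp, rfl⟩
    rw [hrate hp h₁]
    exact infoRate_le hA.le hp h₁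
  refine csSup_le ⟨_, 1 / 2, ⟨by norm_num, by norm_num⟩, rfl⟩ ?_
  rintro r ⟨p, hp, rfl⟩
  rw [hrate hp (h₁.trans h₁₂)]
  calc infoRate A p lam₂ ≤ infoRate A p lam₁ :=
        infoRate_antitoneOn hA.le hp.1.le hp.2.le h₁ (h₁.trans h₁₂) h₁₂
    _ ≤ _ := le_csSup hbdd ⟨p, hp, (hrate hp h₁).symm⟩
end

section
/- For the binary discretized Poisson channel with crossover probabilities W(1|0) = λΔ and W(1|1) = (A+λ)Δ (with (A+λ)Δ < 1), the mutual information I(X;Y) under input X ∼ Ber(p) equals Δ·[p(A+λ)log(A+λ) + (1−p)λ log λ − (pA+λ)log(pA+λ)] + o(Δ) as Δ ↓ 0, uniformly for p in compact subsets of (0,1). -/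
open scoped BigOperators

/-- Mutual information of the binary discretized Poisson channel with input
`Ber(p)` and crossover probabilities `W(1|0) = λΔ`, `W(1|1) = (A+λ)Δ`. -/
noncomputable def binPoissonMI (A lam Δ p : ℝ) : ℝ :=
  mutInfo (fun x : Bool => if x = true then p else 1 - p)
    (fun x y =>
      if y = true then (if x = true then (A + lam) * Δ else lam * Δ)
      else 1 - (if x = true then (A + lam) * Δ else lam * Δ))

/-! Write `I(X;Y) = H(Y) - H(Y|X)` with `negMulLog x = -x log x`. Since
`negMulLog (c Δ) = Δ negMulLog c + c negMulLog Δ` and the output probability `(pA + λ)Δ` is the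
`p`-mixture of `(A + λ)Δ` and `λΔ`, the output-`1` terms give exactly
`Δ (p(A+λ)log(A+λ) + (1-p)λ log λ - (pA+λ)log(pA+λ))`, the `negMulLog Δ` parts cancelling.
The output-`0` terms form the Jensen gap of `t ↦ negMulLog (1 - t)` at this mixture; as
`|negMulLog (1 - t) - t| ≤ t²`, it is at most `2((A + λ)Δ)²`, uniformly in `p ∈ [0, 1]`. -/

open Finset Real

lemma abs_negMulLog_one_sub_sub_self_le {t : ℝ} (ht : t ≤ 1) :
    |negMulLog (1 - t) - t| ≤ t ^ 2 := by
  have hupper : negMulLog (1 - t) ≤ t := by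
    simpa using negMulLog_le_one_sub_self (x := 1 - t) (by linarith)
  have hlower : (1 - t) * t ≤ negMulLog (1 - t) := by
    rcases ht.lt_or_eq with ht | rfl
    · have hlog : log (1 - t) ≤ -t := by
        linarith [log_le_sub_one_of_pos (x := 1 - t) (by linarith)]
      rw [negMulLog]
      nlinarith
    · simp
  rw [abs_le]
  constructor <;> nlinarith

lemma abs_negMulLog_one_sub_convexComb_sub_le {p x y c : ℝ} (hp₀ : 0 ≤ p) (hp₁ : p ≤ 1)
    (hx : x ≤ 1) (hy : y ≤ 1) (hxc : |x| ≤ c) (hyc : |y| ≤ c) :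
    |negMulLog (1 - (p * x + (1 - p) * y)) - p * negMulLog (1 - x) - (1 - p) * negMulLog (1 - y)|
      ≤ 2 * c ^ 2 := by
  set m := p * x + (1 - p) * y
  have hm : m ≤ 1 := by nlinarith
  have hmc : |m| ≤ c := by
    calc |m| ≤ p * |x| + (1 - p) * |y| := by
          simpa [abs_of_nonneg hp₀, abs_of_nonneg (sub_nonneg.2 hp₁)] using
            abs_add_le (p * x) ((1 - p) * y)
      _ ≤ p * c + (1 - p) * c := by gcongr
      _ = c := by ring
  have sq_le {t : ℝ} (htc : |t| ≤ c) : t ^ 2 ≤ c ^ 2 :=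
    sq_le_sq' (abs_le.1 htc).1 (abs_le.1 htc).2
  have hsplit : negMulLog (1 - m) - p * negMulLog (1 - x) - (1 - p) * negMulLog (1 - y)
      = (negMulLog (1 - m) - m) - p * (negMulLog (1 - x) - x)
        - (1 - p) * (negMulLog (1 - y) - y) := by ring
  have em := abs_negMulLog_one_sub_sub_self_le hm
  have ex := abs_negMulLog_one_sub_sub_self_le hx
  have ey := abs_negMulLog_one_sub_sub_self_le hy
  rw [hsplit]
  calc _ ≤ |negMulLog (1 - m) - m| + p * |negMulLog (1 - x) - x|
          + (1 - p) * |negMulLog (1 - y) - y| := by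
        refine (abs_sub _ _).trans (add_le_add ((abs_sub _ _).trans ?_) ?_) <;>
          simp [abs_mul, abs_of_nonneg hp₀, abs_of_nonneg (sub_nonneg.2 hp₁)]
    _ ≤ m ^ 2 + p * x ^ 2 + (1 - p) * y ^ 2 := by gcongr
    _ ≤ 2 * c ^ 2 := by nlinarith [sq_le hmc, sq_le hxc, sq_le hyc]

lemma mutInfo_eq_sum_negMulLog_sub {U Y : Type} [Fintype U] [Fintype Y]
    (PU : U → ℝ) (W : U → Y → ℝ) (hq : ∀ y, ∑ u, PU u * W u y ≠ 0) :
    mutInfo PU W = ∑ y, negMulLog (∑ u, PU u * W u y) - ∑ u, PU u * ∑ y, negMulLog (W u y) := by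
  have hterm : ∀ u y, PU u * W u y * log (W u y / ∑ u', PU u' * W u' y)
      = PU u * W u y * log (W u y) - PU u * W u y * log (∑ u', PU u' * W u' y) := by
    intro u y
    by_cases hW : W u y = 0
    · simp [hW]
    · rw [log_div hW (hq y)]; ring
  simp only [mutInfo, hterm, sum_sub_distrib, negMulLog, mul_sum]
  rw [sum_comm (f := fun u y => PU u * W u y * log (∑ u', PU u' * W u' y))]
  simp only [← sum_mul]
  simp only [neg_mul, mul_neg, sum_neg_distrib, mul_assoc]
  ring

lemma binPoissonMI_eq (A lam Δ p : ℝ) (h₀ : (p * A + lam) * Δ ≠ 0) (h₁ : (p * A + lam) * Δ ≠ 1) :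
    binPoissonMI A lam Δ p =
      Δ * (negMulLog (p * A + lam) - p * negMulLog (A + lam) - (1 - p) * negMulLog lam)
        + (negMulLog (1 - (p * A + lam) * Δ)
          - p * negMulLog (1 - (A + lam) * Δ) - (1 - p) * negMulLog (1 - lam * Δ)) := by
  have hq₁ : p * ((A + lam) * Δ) + (1 - p) * (lam * Δ) = (p * A + lam) * Δ := by ring
  have hq₀ : p * (1 - (A + lam) * Δ) + (1 - p) * (1 - lam * Δ) = 1 - (p * A + lam) * Δ := by ring
  rw [binPoissonMI, mutInfo_eq_sum_negMulLog_sub]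
  · simp only [Fintype.sum_bool, if_true, Bool.false_eq_true, if_false]
    rw [hq₁, hq₀, negMulLog_mul, negMulLog_mul (A + lam), negMulLog_mul lam]
    ring
  · intro y
    cases y <;> simp only [Fintype.sum_bool, if_true, Bool.false_eq_true, if_false]
    · rw [hq₀]; exact sub_ne_zero.2 h₁.symm
    · rwa [hq₁]

/-- As `Δ ↓ 0`, `I(X;Y) = Δ·[p(A+λ)log(A+λ) + (1−p)λ log λ − (pA+λ)log(pA+λ)] + o(Δ)`,
uniformly for `p` in compact subsets of `(0,1)`. -/
theorem binPoissonMI_asymptotics (A lam : ℝ) (hA : 0 < A) (hlam : 0 ≤ lam) :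
    ∀ K : Set ℝ, IsCompact K → K ⊆ Set.Ioo 0 1 →
      ∀ ε > (0 : ℝ), ∃ δ > (0 : ℝ), ∀ Δ : ℝ, 0 < Δ → Δ < δ → (A + lam) * Δ < 1 →
        ∀ p ∈ K,
          |binPoissonMI A lam Δ p -
            Δ * (p * (A + lam) * Real.log (A + lam) + (1 - p) * lam * Real.log lam
              - (p * A + lam) * Real.log (p * A + lam))| ≤ ε * Δ := by
  intro K _ hK ε hε
  have ha : 0 < A + lam := by positivity
  refine ⟨ε / (2 * (A + lam) ^ 2), by positivity, fun Δ hΔ hΔδ haΔ p hp => ?_⟩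
  obtain ⟨hp₀, hp₁⟩ := hK hp
  have hμ : 0 < p * A + lam := by positivity
  have hμΔ : (p * A + lam) * Δ < 1 := by nlinarith
  have hlamΔ : lam * Δ ≤ (A + lam) * Δ := by nlinarith
  have hgap := abs_negMulLog_one_sub_convexComb_sub_le hp₀.le hp₁.le haΔ.le (hlamΔ.trans haΔ.le)
    (abs_of_pos (by positivity)).le (by rwa [abs_of_nonneg (by positivity)])
  have hsq : 2 * ((A + lam) * Δ) ^ 2 ≤ ε * Δ := by
    have := (lt_div_iff₀ (by positivity)).1 hΔδ
    nlinarith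
  have hlimit : p * (A + lam) * log (A + lam) + (1 - p) * lam * log lam
      - (p * A + lam) * log (p * A + lam)
      = negMulLog (p * A + lam) - p * negMulLog (A + lam) - (1 - p) * negMulLog lam := by
    simp only [negMulLog]; ring
  rw [show p * ((A + lam) * Δ) + (1 - p) * (lam * Δ) = (p * A + lam) * Δ by ring] at hgap
  rw [binPoissonMI_eq A lam Δ p (by positivity) hμΔ.ne, hlimit, add_sub_cancel_left]
  exact hgap.trans hsq
end
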